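/- Let f: G → H be an ad-isomorphism of reductive groups over Q_p (f sends the center of G to the center of H and induces an isomorphism of adjoint groups). If [b] ∈ B(G,μ), then [f(b)] ∈ B(H, f∘μ); moreover ([f(b)], [f∘μ]) is Hodge–Newton irreducible if and only if ([b],[μ]) is Hodge–Newton irreducible. -/
import Mathlib


/-!
STATEMENT 2. Let `f : G → H` be an ad-isomorphism of reductive groups over `ℚ_p`
(`f` sends the center of `G` to the center of `H` and induces an isomorphism of adjoint
groups).  If `[b] ∈ B(G,μ)`, then `[f(b)] ∈ B(H, f∘μ)`; moreover `([f(b)],[f∘μ])` is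
Hodge–Newton irreducible iff `([b],[μ])` is.

As in the paper, `[b] ∈ B(G,μ)` iff `κ_G(b) = μ^♮` and
`μ^◇ − ν_b = Σ_{α∈Δ} c_α α^∨` with all `c_α ≥ 0` rational; HN-irreducible means all
`c_α > 0`.  An ad-isomorphism induces `f_* : X_*(T) ⊗ ℚ → X_*(T_H) ⊗ ℚ` matching the
simple coroots bijectively, satisfying `f_*(μ^◇ − ν_b) = μ_H^◇ − ν_{b_H}`, and
commuting with the Kottwitz maps.  The simple coroots are linearly independent.
-/

structure NewtonDatum where
  V : Type*
  [addV : AddCommGroup V]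
  [modV : Module ℚ V]
  Δ : Type*
  [finΔ : Fintype Δ]
  coroot : Δ → V
  muDiamond : V
  nu : V
  kappaEqMuNatural : Prop

attribute [instance] NewtonDatum.addV NewtonDatum.modV NewtonDatum.finΔ

def NewtonDatum.inB (D : NewtonDatum) : Prop :=
  D.kappaEqMuNatural ∧
    ∃ c : D.Δ → ℚ, (∀ a, 0 ≤ c a) ∧ D.muDiamond - D.nu = ∑ a, c a • D.coroot a

def NewtonDatum.HNirred (D : NewtonDatum) : Prop :=
  D.kappaEqMuNatural ∧
    ∃ c : D.Δ → ℚ, (∀ a, 0 < c a) ∧ D.muDiamond - D.nu = ∑ a, c a • D.coroot a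

/-- The data induced by an ad-isomorphism `f : G → H`, with `b_H = f(b)` and
`μ_H = f ∘ μ`. -/
structure AdIsomDatum where
  DG : NewtonDatum
  DH : NewtonDatum
  /-- `f` induces a bijection of the simple (co)roots of `G` and `H` -/
  e : DG.Δ ≃ DH.Δ
  /-- `f_* : X_*(T) ⊗ ℚ → X_*(T_H) ⊗ ℚ` -/
  fstar : DG.V →ₗ[ℚ] DH.V
  coroot_compat : ∀ a, fstar (DG.coroot a) = DH.coroot (e a)
  diamond_compat : fstar (DG.muDiamond - DG.nu) = DH.muDiamond - DH.nu
  /-- `f_*` commutes with the Kottwitz maps: `κ_G(b) = μ^♮ → κ_H(b_H) = μ_H^♮` -/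
  kappa_compat : DG.kappaEqMuNatural → DH.kappaEqMuNatural
  /-- simple coroots are linearly independent -/
  indepG : LinearIndependent ℚ DG.coroot
  indepH : LinearIndependent ℚ DH.coroot

theorem adIsom_inB_and_HNirred_iff (D : AdIsomDatum) (hb : D.DG.inB) :
    D.DH.inB ∧ (D.DH.HNirred ↔ D.DG.HNirred) := by
  obtain ⟨hk, c, hc0, hcsum⟩ := hb
  -- pushforward of a sum over G coroots
  have key : ∀ c : D.DG.Δ → ℚ,
      D.fstar (∑ a, c a • D.DG.coroot a) = ∑ b, c (D.e.symm b) • D.DH.coroot b := by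
    intro c
    rw [map_sum]
    rw [← Equiv.sum_comp D.e (fun b => c (D.e.symm b) • D.DH.coroot b)]
    simp [D.coroot_compat]
  have push : ∀ c : D.DG.Δ → ℚ,
      D.DG.muDiamond - D.DG.nu = ∑ a, c a • D.DG.coroot a →
      D.DH.muDiamond - D.DH.nu = ∑ b, c (D.e.symm b) • D.DH.coroot b := by
    intro c h
    rw [← D.diamond_compat, h, key]
  refine ⟨⟨D.kappa_compat hk, fun b => c (D.e.symm b), fun b => hc0 _, push c hcsum⟩, ?_, ?_⟩
  · rintro ⟨-, d, hd0, hdsum⟩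
    refine ⟨hk, c, fun a => ?_, hcsum⟩
    -- by linear independence, d b = c (e.symm b)
    have := push c hcsum
    rw [hdsum] at this
    have hz : ∑ b, (d b - c (D.e.symm b)) • D.DH.coroot b = 0 := by
      rw [← sub_eq_zero] at this
      rw [← this]
      simp [sub_smul, Finset.sum_sub_distrib]
    have := (Fintype.linearIndependent_iff.mp D.indepH) _ hz (D.e a)
    have hda := hd0 (D.e a)
    have : d (D.e a) = c a := by
      have h2 := this
      rw [sub_eq_zero] at h2
      simpa using h2
    linarith
  · rintro ⟨-, d, hd0, hdsum⟩
    exact ⟨D.kappa_compat hk, fun b => d (D.e.symm b), fun b => hd0 _, push d hdsum⟩
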